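/- Let p ∈ (0,1], let ε ∈ (0,1), let f : X → Y be an ε-isometry between p-normed spaces, let H be a p-Banach space, and let r : X → H and s : Y → H be nonexpansive linear operators such that N_H(s (f x) − r x) ≤ ε * N_X(x) for all x ∈ X. Then there exists a p-norm M on X × Y such that M (x, 0) = N_X(x) for all x, M (0, y) = N_Y(y) for all y, M (−x, f x) ≤ ε * N_X(x) for all x, and the linear operator (x, y) ↦ r x + s y is nonexpansive from (X × Y, M) to H, i.e. N_H(r x + s y) ≤ M (x, y) for all (x, y) ∈ X × Y. -/

import Mathlib

/- Common framework: p-normed and p-Banach spaces, following the paper's definitions. -/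

namespace PGurarii

/-- A `p`-norm on a real vector space: `N x = 0 ↔ x = 0`, absolute homogeneity, and the
`p`-triangle inequality `N (x + y) ^ p ≤ N x ^ p + N y ^ p` (values in `ℝ₊`). -/
structure PNorm (p : ℝ) (X : Type) [AddCommGroup X] [Module ℝ X] where
  N : X → ℝ
  nonneg : ∀ x : X, 0 ≤ N x
  eq_zero_iff : ∀ x : X, N x = 0 ↔ x = 0
  smul_eq : ∀ (a : ℝ) (x : X), N (a • x) = |a| * N x
  add_pow_le : ∀ x y : X, N (x + y) ^ p ≤ N x ^ p + N y ^ p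

/-- Completeness (sequential) for the induced metric `d(x,y) = N (x - y) ^ p`. -/
def IsCompleteP (p : ℝ) {X : Type} [AddCommGroup X] [Module ℝ X] (NX : PNorm p X) : Prop :=
  ∀ u : ℕ → X,
    (∀ ε : ℝ, 0 < ε → ∃ n₀ : ℕ, ∀ m ≥ n₀, ∀ n ≥ n₀, NX.N (u m - u n) ^ p < ε) →
    ∃ x : X, ∀ ε : ℝ, 0 < ε → ∃ n₀ : ℕ, ∀ n ≥ n₀, NX.N (u n - x) ^ p < ε

/-- Separability for the induced metric topology. -/
def IsSeparableP (p : ℝ) {X : Type} [AddCommGroup X] [Module ℝ X] (NX : PNorm p X) : Prop :=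
  ∃ D : Set X, D.Countable ∧ ∀ x : X, ∀ ε : ℝ, 0 < ε → ∃ y ∈ D, NX.N (x - y) ^ p < ε

/-- A subspace is closed for the induced metric topology. -/
def IsClosedSubP (p : ℝ) {X : Type} [AddCommGroup X] [Module ℝ X] (NX : PNorm p X)
    (S : Submodule ℝ X) : Prop :=
  ∀ x : X, (∀ ε : ℝ, 0 < ε → ∃ y ∈ S, NX.N (x - y) ^ p < ε) → x ∈ S

/-- The restriction of a `p`-norm to a subspace. -/
def PNorm.restrict {p : ℝ} {X : Type} [AddCommGroup X] [Module ℝ X]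
    (NX : PNorm p X) (S : Submodule ℝ X) : PNorm p S where
  N x := NX.N x
  nonneg x := NX.nonneg x
  eq_zero_iff x := by rw [NX.eq_zero_iff]; exact ZeroMemClass.coe_eq_zero
  smul_eq a x := NX.smul_eq a x
  add_pow_le x y := NX.add_pow_le x y

/-- A `p`-Banach space: a real vector space with a `p`-norm, complete for the induced metric. -/
structure PBanach (p : ℝ) where
  carrier : Type
  [addCommGroup : AddCommGroup carrier]
  [module : Module ℝ carrier]
  pnorm : PNorm p carrier
  complete : IsCompleteP p pnorm

attribute [instance] PBanach.addCommGroup PBanach.module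

/-- `U` is of almost universal disposition for finite-dimensional `p`-Banach spaces: for every
`ε > 0`, every isometry from a subspace `X` of `U` (with the restricted `p`-norm) into a
finite-dimensional `p`-Banach space `Y` extends, after an `ε`-isometry `Y → U`, the inclusion. -/
def AUD (p : ℝ) (U : Type) [AddCommGroup U] [Module ℝ U] (NU : PNorm p U) : Prop :=
  ∀ ε : ℝ, 0 < ε → ∀ Y : PBanach p, FiniteDimensional ℝ Y.carrier →
    ∀ (Xs : Submodule ℝ U) (g : Xs →ₗ[ℝ] Y.carrier),
      (∀ x : Xs, Y.pnorm.N (g x) = NU.N (x : U)) →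
      ∃ f : Y.carrier →ₗ[ℝ] U,
        (∀ y, (1 - ε) * Y.pnorm.N y ≤ NU.N (f y) ∧ NU.N (f y) ≤ (1 + ε) * Y.pnorm.N y) ∧
        ∀ x : Xs, f (g x) = (x : U)

/-- `U` is of universal disposition for separable `p`-Banach spaces. -/
def UD (p : ℝ) (U : Type) [AddCommGroup U] [Module ℝ U] (NU : PNorm p U) : Prop :=
  ∀ Y : PBanach p, IsSeparableP p Y.pnorm →
    ∀ (Xs : Submodule ℝ U), IsClosedSubP p NU Xs →
      ∀ g : Xs →ₗ[ℝ] Y.carrier, (∀ x : Xs, Y.pnorm.N (g x) = NU.N (x : U)) →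
        ∃ f : Y.carrier →ₗ[ℝ] U, (∀ y, NU.N (f y) = Y.pnorm.N y) ∧ ∀ x : Xs, f (g x) = (x : U)

/-!
Take `M(x, y)^p = inf_u (N_X(x + u)^p + N_Y(y - f u)^p + ε^p N_X(u)^p)`: the quotient of the
`ℓ_p`-sum `X ⊕ Y ⊕ εX` by the subspace `{(u, -f u, u)}`, restricted to `X × Y`, hence a `p`-norm.
Taking `u = x` gives `M(-x, f x) ≤ ε N_X(x)`. Because `f` is an `ε`-isometry,
`N_X(u)^p ≤ N_Y(f u)^p + ε^p N_X(u)^p` and `N_Y(f u)^p ≤ N_X(u)^p + ε^p N_X(u)^p`, so by the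
`p`-triangle inequality no `u` does better than `u = 0` on `X × 0` and on `0 × Y`. Finally
`r x + s y = r (x + u) + s (y - f u) + (s (f u) - r u)` bounds `N_H(r x + s y)^p` by every term
of the infimum.
-/

/-- `ρ = N ^ p` for a `p`-seminorm `N`. -/
structure IsPowSeminorm (p : ℝ) {E : Type*} [AddCommGroup E] [Module ℝ E] (ρ : E → ℝ) :
    Prop where
  nonneg : ∀ v, 0 ≤ ρ v
  smul : ∀ (a : ℝ) (v : E), ρ (a • v) = |a| ^ p * ρ v
  add_le : ∀ v w, ρ (v + w) ≤ ρ v + ρ w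

namespace IsPowSeminorm

variable {p : ℝ} {E F : Type*} [AddCommGroup E] [Module ℝ E] [AddCommGroup F] [Module ℝ F]
  {ρ σ : E → ℝ}

lemma map_zero (hρ : IsPowSeminorm p ρ) (hp : p ≠ 0) : ρ 0 = 0 := by
  simpa [Real.zero_rpow hp] using hρ.smul 0 0

lemma add (hρ : IsPowSeminorm p ρ) (hσ : IsPowSeminorm p σ) :
    IsPowSeminorm p (fun v => ρ v + σ v) where
  nonneg v := add_nonneg (hρ.nonneg v) (hσ.nonneg v)
  smul a v := by rw [hρ.smul, hσ.smul, mul_add]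
  add_le v w := by linarith [hρ.add_le v w, hσ.add_le v w]

lemma const_mul (hρ : IsPowSeminorm p ρ) {c : ℝ} (hc : 0 ≤ c) :
    IsPowSeminorm p (fun v => c * ρ v) where
  nonneg v := mul_nonneg hc (hρ.nonneg v)
  smul a v := by rw [hρ.smul, mul_left_comm]
  add_le v w := by rw [← mul_add]; exact mul_le_mul_of_nonneg_left (hρ.add_le v w) hc

lemma comp (hρ : IsPowSeminorm p ρ) (L : F →ₗ[ℝ] E) : IsPowSeminorm p (ρ ∘ L) where
  nonneg v := hρ.nonneg (L v)
  smul a v := by simp only [Function.comp_apply, map_smul, hρ.smul]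
  add_le v w := by simpa only [Function.comp_apply, map_add] using hρ.add_le (L v) (L w)

end IsPowSeminorm

section CosetInf

variable {p : ℝ} {E F : Type*} [AddCommGroup E] [Module ℝ E] [AddCommGroup F] [Module ℝ F]
  {ρ : E → ℝ}

noncomputable def cosetInf (ρ : E → ℝ) (g : F →ₗ[ℝ] E) (v : E) : ℝ := ⨅ u, ρ (v + g u)

variable (g : F →ₗ[ℝ] E)

lemma cosetInf_le (hρ : ∀ v, 0 ≤ ρ v) (v : E) (u : F) : cosetInf ρ g v ≤ ρ (v + g u) :=
  ciInf_le ⟨0, by rintro _ ⟨u, rfl⟩; exact hρ _⟩ u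

lemma le_cosetInf {v : E} {c : ℝ} (h : ∀ u, c ≤ ρ (v + g u)) : c ≤ cosetInf ρ g v :=
  le_ciInf h

lemma isPowSeminorm_cosetInf (hρ : IsPowSeminorm p ρ) (hp : p ≠ 0) :
    IsPowSeminorm p (cosetInf ρ g) where
  nonneg v := le_cosetInf g fun u => hρ.nonneg _
  smul a v := by
    rcases eq_or_ne a 0 with rfl | ha
    · rw [zero_smul, abs_zero, Real.zero_rpow hp, zero_mul]
      refine le_antisymm ?_ (le_cosetInf g fun u => hρ.nonneg _)
      simpa [hρ.map_zero hp] using cosetInf_le g hρ.nonneg 0 0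
    · have hsmul : ∀ u, ρ (a • v + g (a • u)) = |a| ^ p * ρ (v + g u) := fun u => by
        rw [map_smul, ← smul_add, hρ.smul]
      rw [cosetInf, ← (LinearEquiv.smulOfNeZero ℝ F a ha).surjective.iInf_comp]
      simp only [LinearEquiv.smulOfNeZero_apply, hsmul]
      rw [cosetInf, Real.mul_iInf_of_nonneg (by positivity)]
  add_le v w := le_ciInf_add_ciInf fun u₁ u₂ =>
    calc cosetInf ρ g (v + w) ≤ ρ (v + w + g (u₁ + u₂)) := cosetInf_le g hρ.nonneg _ _
      _ = ρ ((v + g u₁) + (w + g u₂)) := by rw [map_add, add_add_add_comm]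
      _ ≤ ρ (v + g u₁) + ρ (w + g u₂) := hρ.add_le _ _

end CosetInf

section PNorm

variable {p : ℝ} {X : Type} [AddCommGroup X] [Module ℝ X]

lemma PNorm.N_zero (N : PNorm p X) : N.N 0 = 0 := (N.eq_zero_iff 0).mpr rfl

lemma PNorm.N_neg (N : PNorm p X) (x : X) : N.N (-x) = N.N x := by
  simpa using N.smul_eq (-1) x

lemma PNorm.rpow_le_rpow_sub_add_rpow (N : PNorm p X) (x y : X) :
    N.N x ^ p ≤ N.N (x - y) ^ p + N.N y ^ p := by
  simpa using N.add_pow_le (x - y) y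

lemma PNorm.isPowSeminorm_rpow (N : PNorm p X) : IsPowSeminorm p (fun x => N.N x ^ p) where
  nonneg x := Real.rpow_nonneg (N.nonneg x) p
  smul a x := by rw [N.smul_eq, Real.mul_rpow (abs_nonneg a) (N.nonneg x)]
  add_le := N.add_pow_le

noncomputable def PNorm.ofIsPowSeminorm {ρ : X → ℝ} (hρ : IsPowSeminorm p ρ) (hp : p ≠ 0)
    (hdef : ∀ x, ρ x = 0 → x = 0) : PNorm p X where
  N x := ρ x ^ p⁻¹
  nonneg x := Real.rpow_nonneg (hρ.nonneg x) _
  eq_zero_iff x := by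
    rw [Real.rpow_eq_zero (hρ.nonneg x) (inv_ne_zero hp)]
    exact ⟨hdef x, fun hx => hx ▸ hρ.map_zero hp⟩
  smul_eq a x := by
    rw [hρ.smul, Real.mul_rpow (by positivity) (hρ.nonneg x),
      Real.rpow_rpow_inv (abs_nonneg a) hp]
  add_pow_le x y := by
    simp only [Real.rpow_inv_rpow (hρ.nonneg _) hp]
    exact hρ.add_le x y

lemma PNorm.ofIsPowSeminorm_rpow {ρ : X → ℝ} (hρ : IsPowSeminorm p ρ) (hp : p ≠ 0)
    (hdef : ∀ x, ρ x = 0 → x = 0) (x : X) : (PNorm.ofIsPowSeminorm hρ hp hdef).N x ^ p = ρ x :=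
  Real.rpow_inv_rpow (hρ.nonneg x) hp

end PNorm

lemma rpow_le_rpow_add_mul_rpow_of_one_sub_mul_le {p ε a b : ℝ} (hp0 : 0 ≤ p) (hp1 : p ≤ 1)
    (hε0 : 0 ≤ ε) (hε1 : ε ≤ 1) (ha : 0 ≤ a) (h : (1 - ε) * a ≤ b) :
    a ^ p ≤ b ^ p + ε ^ p * a ^ p :=
  calc a ^ p = ((1 - ε) * a + ε * a) ^ p := by ring_nf
    _ ≤ ((1 - ε) * a) ^ p + (ε * a) ^ p :=
      Real.rpow_add_le_add_rpow (by nlinarith) (by positivity) hp0 hp1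
    _ ≤ b ^ p + ε ^ p * a ^ p := by
      rw [Real.mul_rpow hε0 ha]
      gcongr

lemma rpow_le_rpow_add_mul_rpow_of_le_one_add_mul {p ε a b : ℝ} (hp0 : 0 ≤ p) (hp1 : p ≤ 1)
    (hε0 : 0 ≤ ε) (ha : 0 ≤ a) (hb : 0 ≤ b) (h : b ≤ (1 + ε) * a) :
    b ^ p ≤ a ^ p + ε ^ p * a ^ p :=
  calc b ^ p ≤ (a + ε * a) ^ p := by gcongr; linarith
    _ ≤ a ^ p + (ε * a) ^ p := Real.rpow_add_le_add_rpow ha (by positivity) hp0 hp1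
    _ = a ^ p + ε ^ p * a ^ p := by rw [Real.mul_rpow hε0 ha]

section Amalgamation

variable {p : ℝ} {X Y : Type} [AddCommGroup X] [Module ℝ X] [AddCommGroup Y] [Module ℝ Y]
  (NX : PNorm p X) (NY : PNorm p Y) (f : X →ₗ[ℝ] Y) {ε : ℝ}

variable (ε) in
noncomputable def amalgamationWeight (w : (X × Y) × X) : ℝ :=
  NX.N w.1.1 ^ p + NY.N w.1.2 ^ p + ε ^ p * NX.N w.2 ^ p

def amalgamationShift : X →ₗ[ℝ] (X × Y) × X := (LinearMap.id.prod (-f)).prod LinearMap.id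

variable (ε) in
noncomputable def amalgamationRpow (v : X × Y) : ℝ :=
  cosetInf (amalgamationWeight NX NY ε) (amalgamationShift f) (v, 0)

lemma isPowSeminorm_amalgamationWeight (hε : 0 ≤ ε) :
    IsPowSeminorm p (amalgamationWeight NX NY ε) :=
  ((NX.isPowSeminorm_rpow.comp (LinearMap.fst ℝ X Y ∘ₗ LinearMap.fst ℝ (X × Y) X)).add
    (NY.isPowSeminorm_rpow.comp (LinearMap.snd ℝ X Y ∘ₗ LinearMap.fst ℝ (X × Y) X))).add
    ((NX.isPowSeminorm_rpow.comp (LinearMap.snd ℝ (X × Y) X)).const_mul (by positivity))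

lemma isPowSeminorm_amalgamationRpow (hp : p ≠ 0) (hε : 0 ≤ ε) :
    IsPowSeminorm p (amalgamationRpow NX NY f ε) :=
  (isPowSeminorm_cosetInf _ (isPowSeminorm_amalgamationWeight NX NY hε) hp).comp
    (LinearMap.inl ℝ (X × Y) X)

lemma mk_zero_add_amalgamationShift (v : X × Y) (u : X) :
    ((v, 0) : (X × Y) × X) + amalgamationShift f u = ((v.1 + u, v.2 - f u), u) := by
  ext <;> simp [amalgamationShift, sub_eq_add_neg]

lemma amalgamationRpow_le (hε : 0 ≤ ε) (v : X × Y) (u : X) :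
    amalgamationRpow NX NY f ε v
      ≤ NX.N (v.1 + u) ^ p + NY.N (v.2 - f u) ^ p + ε ^ p * NX.N u ^ p := by
  have h := cosetInf_le (amalgamationShift f) (isPowSeminorm_amalgamationWeight NX NY hε).nonneg
    (v, 0) u
  rwa [mk_zero_add_amalgamationShift] at h

lemma le_amalgamationRpow {v : X × Y} {c : ℝ}
    (h : ∀ u, c ≤ NX.N (v.1 + u) ^ p + NY.N (v.2 - f u) ^ p + ε ^ p * NX.N u ^ p) :
    c ≤ amalgamationRpow NX NY f ε v :=
  le_cosetInf _ fun u => by rw [mk_zero_add_amalgamationShift]; exact h u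

lemma amalgamationRpow_inl (hp0 : 0 < p) (hp1 : p ≤ 1) (hε0 : 0 ≤ ε) (hε1 : ε ≤ 1)
    (hf : ∀ x, (1 - ε) * NX.N x ≤ NY.N (f x)) (x : X) :
    amalgamationRpow NX NY f ε (x, 0) = NX.N x ^ p := by
  refine le_antisymm ?_ (le_amalgamationRpow NX NY f fun u => ?_)
  · simpa [NX.N_zero, NY.N_zero, Real.zero_rpow hp0.ne'] using
      amalgamationRpow_le NX NY f hε0 (x, 0) 0
  calc NX.N x ^ p ≤ NX.N (x + u) ^ p + NX.N u ^ p := by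
        simpa [NX.N_neg] using NX.rpow_le_rpow_sub_add_rpow x (-u)
    _ ≤ NX.N (x + u) ^ p + (NY.N (f u) ^ p + ε ^ p * NX.N u ^ p) := by
        gcongr
        exact rpow_le_rpow_add_mul_rpow_of_one_sub_mul_le hp0.le hp1 hε0 hε1 (NX.nonneg u) (hf u)
    _ = NX.N ((x, (0 : Y)).1 + u) ^ p + NY.N ((x, (0 : Y)).2 - f u) ^ p
          + ε ^ p * NX.N u ^ p := by
        rw [zero_sub, NY.N_neg]; ring

lemma amalgamationRpow_inr (hp0 : 0 < p) (hp1 : p ≤ 1) (hε0 : 0 ≤ ε)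
    (hf : ∀ x, NY.N (f x) ≤ (1 + ε) * NX.N x) (y : Y) :
    amalgamationRpow NX NY f ε (0, y) = NY.N y ^ p := by
  refine le_antisymm ?_ (le_amalgamationRpow NX NY f fun u => ?_)
  · simpa [NX.N_zero, Real.zero_rpow hp0.ne'] using amalgamationRpow_le NX NY f hε0 (0, y) 0
  calc NY.N y ^ p ≤ NY.N (y - f u) ^ p + NY.N (f u) ^ p := NY.rpow_le_rpow_sub_add_rpow y (f u)
    _ ≤ NY.N (y - f u) ^ p + (NX.N u ^ p + ε ^ p * NX.N u ^ p) := by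
        gcongr
        exact rpow_le_rpow_add_mul_rpow_of_le_one_add_mul hp0.le hp1 hε0 (NX.nonneg u)
          (NY.nonneg _) (hf u)
    _ = NX.N (((0 : X), y).1 + u) ^ p + NY.N (((0 : X), y).2 - f u) ^ p
          + ε ^ p * NX.N u ^ p := by
        rw [zero_add]; ring

lemma amalgamationRpow_neg_apply_le (hp : p ≠ 0) (hε : 0 ≤ ε) (x : X) :
    amalgamationRpow NX NY f ε (-x, f x) ≤ ε ^ p * NX.N x ^ p := by
  simpa [NX.N_zero, NY.N_zero, Real.zero_rpow hp] using amalgamationRpow_le NX NY f hε (-x, f x) x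

lemma mul_rpow_fst_le_amalgamationRpow (hp : 0 ≤ p) (hε0 : 0 ≤ ε) (hε1 : ε ≤ 1) (v : X × Y) :
    ε ^ p * NX.N v.1 ^ p ≤ amalgamationRpow NX NY f ε v := by
  refine le_amalgamationRpow NX NY f fun u => ?_
  have hεp : ε ^ p ≤ 1 := Real.rpow_le_one hε0 hε1 hp
  have htri : NX.N v.1 ^ p ≤ NX.N (v.1 + u) ^ p + NX.N u ^ p := by
    simpa [NX.N_neg] using NX.rpow_le_rpow_sub_add_rpow v.1 (-u)
  have := Real.rpow_nonneg (NX.nonneg (v.1 + u)) p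
  have := Real.rpow_nonneg (NY.nonneg (v.2 - f u)) p
  have := Real.rpow_nonneg hε0 p
  nlinarith

lemma eq_zero_of_amalgamationRpow_eq_zero (hp0 : 0 < p) (hp1 : p ≤ 1) (hε0 : 0 < ε) (hε1 : ε ≤ 1)
    (hf : ∀ x, NY.N (f x) ≤ (1 + ε) * NX.N x) {v : X × Y}
    (hv : amalgamationRpow NX NY f ε v = 0) : v = 0 := by
  obtain ⟨x, y⟩ := v
  have hx : x = 0 := by
    have h := mul_rpow_fst_le_amalgamationRpow NX NY f hp0.le hε0.le hε1 (x, y)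
    rw [hv] at h
    have hεp : 0 < ε ^ p := Real.rpow_pos_of_pos hε0 p
    have hxp : NX.N x ^ p = 0 :=
      le_antisymm (nonpos_of_mul_nonpos_right h hεp) (Real.rpow_nonneg (NX.nonneg x) p)
    rwa [Real.rpow_eq_zero (NX.nonneg x) hp0.ne', NX.eq_zero_iff] at hxp
  subst hx
  have hyp := amalgamationRpow_inr NX NY f hp0 hp1 hε0.le hf y
  rw [hv, eq_comm, Real.rpow_eq_zero (NY.nonneg y) hp0.ne', NY.eq_zero_iff] at hyp
  rw [hyp, Prod.mk_zero_zero]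

lemma rpow_le_amalgamationRpow {H : Type} [AddCommGroup H] [Module ℝ H] (NH : PNorm p H)
    (hp : 0 ≤ p) (hε : 0 ≤ ε) (r : X →ₗ[ℝ] H) (hr : ∀ x, NH.N (r x) ≤ NX.N x)
    (s : Y →ₗ[ℝ] H) (hs : ∀ y, NH.N (s y) ≤ NY.N y)
    (hclose : ∀ x, NH.N (s (f x) - r x) ≤ ε * NX.N x) (v : X × Y) :
    NH.N (r v.1 + s v.2) ^ p ≤ amalgamationRpow NX NY f ε v := by
  refine le_amalgamationRpow NX NY f fun u => ?_
  have hsplit : r v.1 + s v.2 = r (v.1 + u) + (s (v.2 - f u) + (s (f u) - r u)) := by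
    simp only [map_add, map_sub]; abel
  calc NH.N (r v.1 + s v.2) ^ p
      ≤ NH.N (r (v.1 + u)) ^ p + (NH.N (s (v.2 - f u)) ^ p + NH.N (s (f u) - r u) ^ p) := by
        rw [hsplit]
        exact (NH.add_pow_le _ _).trans (add_le_add le_rfl (NH.add_pow_le _ _))
    _ ≤ NX.N (v.1 + u) ^ p + (NY.N (v.2 - f u) ^ p + (ε * NX.N u) ^ p) := by
        gcongr
        exacts [NH.nonneg _, hr _, NH.nonneg _, hs _, NH.nonneg _, hclose u]
    _ = NX.N (v.1 + u) ^ p + NY.N (v.2 - f u) ^ p + ε ^ p * NX.N u ^ p := by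
        rw [Real.mul_rpow hε (NX.nonneg u)]; ring

end Amalgamation

/-- the operator version of the two-space amalgamation lemma: the `p`-norm on
`X × Y` from Lemma `key` can be chosen so that `(x, y) ↦ r x + s y` is nonexpansive into `H`. -/
theorem statement14 (p : ℝ) (hp0 : 0 < p) (hp1 : p ≤ 1)
    (X Y : Type) [AddCommGroup X] [Module ℝ X] [AddCommGroup Y] [Module ℝ Y]
    (NX : PNorm p X) (NY : PNorm p Y)
    (H : PBanach p)
    (ε : ℝ) (hε0 : 0 < ε) (hε1 : ε < 1)
    (f : X →ₗ[ℝ] Y)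
    (hf : ∀ x : X, (1 - ε) * NX.N x ≤ NY.N (f x) ∧ NY.N (f x) ≤ (1 + ε) * NX.N x)
    (r : X →ₗ[ℝ] H.carrier) (hr : ∀ x : X, H.pnorm.N (r x) ≤ NX.N x)
    (s : Y →ₗ[ℝ] H.carrier) (hs : ∀ y : Y, H.pnorm.N (s y) ≤ NY.N y)
    (hclose : ∀ x : X, H.pnorm.N (s (f x) - r x) ≤ ε * NX.N x) :
    ∃ M : PNorm p (X × Y),
      (∀ x : X, M.N (x, 0) = NX.N x) ∧
      (∀ y : Y, M.N (0, y) = NY.N y) ∧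
      (∀ x : X, M.N (-x, f x) ≤ ε * NX.N x) ∧
      ∀ v : X × Y, H.pnorm.N (r v.1 + s v.2) ≤ M.N v := by
  have hp : p ≠ 0 := hp0.ne'
  have hQ := isPowSeminorm_amalgamationRpow NX NY f hp hε0.le
  have hdef : ∀ v, amalgamationRpow NX NY f ε v = 0 → v = 0 := fun _ =>
    eq_zero_of_amalgamationRpow_eq_zero NX NY f hp0 hp1 hε0 hε1.le fun x => (hf x).2
  set M := PNorm.ofIsPowSeminorm hQ hp hdef
  have hM : ∀ v, M.N v ^ p = amalgamationRpow NX NY f ε v := PNorm.ofIsPowSeminorm_rpow hQ hp hdef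
  refine ⟨M, fun x => ?_, fun y => ?_, fun x => ?_, fun v => ?_⟩
  · rw [← Real.rpow_left_inj (M.nonneg _) (NX.nonneg x) hp, hM,
      amalgamationRpow_inl NX NY f hp0 hp1 hε0.le hε1.le (fun x => (hf x).1)]
  · rw [← Real.rpow_left_inj (M.nonneg _) (NY.nonneg y) hp, hM,
      amalgamationRpow_inr NX NY f hp0 hp1 hε0.le fun x => (hf x).2]
  · rw [← Real.rpow_le_rpow_iff (M.nonneg _) (by have := NX.nonneg x; positivity) hp0, hM,
      Real.mul_rpow hε0.le (NX.nonneg x)]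
    exact amalgamationRpow_neg_apply_le NX NY f hp hε0.le x
  · rw [← Real.rpow_le_rpow_iff (H.pnorm.nonneg _) (M.nonneg _) hp0, hM]
    exact rpow_le_amalgamationRpow NX NY f H.pnorm hp0.le hε0.le r hr s hs hclose v

end PGurarii
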